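/- Pointwise pseudoconvexity estimate for the gradient term. Let K ⊂ ℝ^n be compact, let ψ be of class C^2 on an open neighborhood of K, and assume δ := min over K of |∇ψ| > 0. Then there exist C > 0 and γ* ≥ 1 (depending on g, ψ, K, δ) such that for all γ ≥ γ*, all x ∈ K and all X ∈ ℝ^n, writing φ̃ := e^{γψ}, one has 2 ∇²_g φ̃(X,X) + (Δ_g φ̃) |X|_g^2 ≥ C γ^2 φ̃ |X|_g^2, where |X|_g^2 = g_ij X^i X^j. -/

import Mathlib

open MeasureTheory Set
open scoped Topology RealInnerProductSpace

noncomputable section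

/-- Euclidean space `ℝ^n`. -/
abbrev Eucl (n : ℕ) : Type := EuclideanSpace ℝ (Fin n)

variable {n : ℕ}

/-- `i`-th partial derivative `∂_i u`. -/
def pd (u : Eucl n → ℝ) (i : Fin n) (x : Eucl n) : ℝ :=
  fderiv ℝ u x (EuclideanSpace.single i 1)

/-- Laplace–Beltrami operator
`Δ_g u = |g|^{-1/2} ∂_i (|g|^{1/2} g^{ij} ∂_j u)` (with `(g^{ij}) = (g_{ij})⁻¹`). -/
def LapBel (g : Eucl n → Matrix (Fin n) (Fin n) ℝ) (u : Eucl n → ℝ) (x : Eucl n) : ℝ :=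
  (Real.sqrt (g x).det)⁻¹ *
    ∑ i, pd (fun y => Real.sqrt (g y).det * ∑ j, (g y)⁻¹ i j * pd u j y) i x

/-- `⟨∇_g w, ∇_g z⟩_g = g^{ij} ∂_i w ∂_j z`. -/
def gInnerGrad (g : Eucl n → Matrix (Fin n) (Fin n) ℝ) (w z : Eucl n → ℝ) (x : Eucl n) : ℝ :=
  ∑ i, ∑ j, (g x)⁻¹ i j * pd w i x * pd z j x

/-- Uniform ellipticity: `g_{ij}(x) ξ^i ξ^j ≥ θ |ξ|²` for all `x, ξ`. -/
def UniformlyElliptic (g : Eucl n → Matrix (Fin n) (Fin n) ℝ) (θ : ℝ) : Prop :=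
  ∀ (x : Eucl n) (ξ : Fin n → ℝ), θ * ∑ i, (ξ i) ^ 2 ≤ ∑ i, ∑ j, g x i j * ξ i * ξ j

/-- Symmetric matrix-valued metric with `C³` entries having bounded derivatives up to order 3. -/
def MetricC3Bounded (g : Eucl n → Matrix (Fin n) (Fin n) ℝ) : Prop :=
  (∀ x, (g x).IsSymm) ∧ (∀ i j, ContDiff ℝ 3 fun x => g x i j) ∧
    ∃ M : ℝ, ∀ (i j : Fin n) (k : ℕ), k ≤ 3 → ∀ x,
      ‖iteratedFDeriv ℝ k (fun y => g y i j) x‖ ≤ M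

/-- Symmetric matrix-valued metric with `C¹` entries. -/
def MetricC1 (g : Eucl n → Matrix (Fin n) (Fin n) ℝ) : Prop :=
  (∀ x, (g x).IsSymm) ∧ ∀ i j, ContDiff ℝ 1 fun x => g x i j

/-- A bounded open set has `C⁴` boundary: near each boundary point there is a `C⁴` defining
function `ρ` with nonvanishing gradient, `D = {ρ < 0}` and `∂D = {ρ = 0}` locally. -/
def HasC4Boundary (D : Set (Eucl n)) : Prop :=
  ∀ x ∈ frontier D, ∃ (V : Set (Eucl n)) (ρ : Eucl n → ℝ),
    IsOpen V ∧ x ∈ V ∧ ContDiffOn ℝ 4 ρ V ∧ (∀ y ∈ V, gradient ρ y ≠ 0) ∧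
    D ∩ V = {y | y ∈ V ∧ ρ y < 0} ∧ frontier D ∩ V = {y | y ∈ V ∧ ρ y = 0}

/-- `ν` is the outward unit normal field of `D` on `∂D`: `ν = ∇ρ/|∇ρ|` for local `C⁴`
defining functions `ρ`. -/
def IsOutwardNormalField (D : Set (Eucl n)) (ν : Eucl n → Eucl n) : Prop :=
  ∀ x ∈ frontier D, ∃ (V : Set (Eucl n)) (ρ : Eucl n → ℝ),
    IsOpen V ∧ x ∈ V ∧ ContDiffOn ℝ 4 ρ V ∧ (∀ y ∈ V, gradient ρ y ≠ 0) ∧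
    D ∩ V = {y | y ∈ V ∧ ρ y < 0} ∧ frontier D ∩ V = {y | y ∈ V ∧ ρ y = 0} ∧
    ν x = ‖gradient ρ x‖⁻¹ • gradient ρ x

/-- Normal derivative `∂_ν w = ∇w · ν`. -/
def normalDeriv (ν : Eucl n → Eucl n) (w : Eucl n → ℝ) (x : Eucl n) : ℝ :=
  ⟪gradient w x, ν x⟫

/-- Tangential gradient `∇_τ w = ∇w − (∂_ν w) ν`. -/
def tangGrad (ν : Eucl n → Eucl n) (w : Eucl n → ℝ) (x : Eucl n) : Eucl n :=
  gradient w x - (normalDeriv ν w x) • ν x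

/-- `g`-normal derivative `∂_{ν_g} w = g^{ij} ν_i ∂_j w / √(g^{kℓ} ν_k ν_ℓ)`. -/
def gNormalDeriv (g : Eucl n → Matrix (Fin n) (Fin n) ℝ) (ν : Eucl n → Eucl n)
    (w : Eucl n → ℝ) (x : Eucl n) : ℝ :=
  (∑ i, ∑ j, (g x)⁻¹ i j * ν x i * pd w j x) /
    Real.sqrt (∑ k, ∑ l, (g x)⁻¹ k l * ν x k * ν x l)

/-- Christoffel symbols `Γ^k_{ij} = (1/2) g^{kℓ}(∂_i g_{jℓ} + ∂_j g_{iℓ} − ∂_ℓ g_{ij})`. -/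
def christoffel (g : Eucl n → Matrix (Fin n) (Fin n) ℝ) (k i j : Fin n) (x : Eucl n) : ℝ :=
  (1 / 2) * ∑ l, (g x)⁻¹ k l *
    (pd (fun y => g y j l) i x + pd (fun y => g y i l) j x - pd (fun y => g y i j) l x)

/-- Covariant Hessian `∇²_g w(X,X) = (∂_i∂_j w − Γ^k_{ij} ∂_k w) X^i X^j`. -/
def covHess (g : Eucl n → Matrix (Fin n) (Fin n) ℝ) (w : Eucl n → ℝ) (x : Eucl n)
    (X : Fin n → ℝ) : ℝ :=
  ∑ i, ∑ j, (pd (pd w j) i x - ∑ k, christoffel g k i j x * pd w k x) * X i * X j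

/-- The vector `∇_g w = (g^{ij} ∂_j w)_i`. -/
def gGrad (g : Eucl n → Matrix (Fin n) (Fin n) ℝ) (w : Eucl n → ℝ) (x : Eucl n) :
    Fin n → ℝ :=
  fun i => ∑ j, (g x)⁻¹ i j * pd w j x


/-! With `φ̃ = e^{γψ}` one has `∇²_g φ̃(X,X) = γφ̃ (γ (∂ψ·X)² + ∇²_g ψ(X,X))` and
`Δ_g φ̃ = γφ̃ (γ |∇ψ|_g² + Δ_g ψ)`. Dropping the square, the left-hand side is at least
`γφ̃ (γ |∇ψ|_g² - B) |X|_g²`, where `B` bounds the `ψ`-terms on the compact set `K` against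
`|X|_g²` (by ellipticity `|X|² ≤ θ⁻¹ |X|_g²`). Since `|∇ψ|_g² ≥ c > 0` on `K`, every
`γ ≥ 2B/c` gives the estimate with `C = c/2`. -/

section MatrixRegularity

variable {E ι : Type*} [NormedAddCommGroup E] [NormedSpace ℝ E] [Fintype ι] [DecidableEq ι]
  {k : WithTop ℕ∞} {M : E → Matrix ι ι ℝ}

theorem contDiff_matrix_det (h : ∀ i j, ContDiff ℝ k fun x => M x i j) :
    ContDiff ℝ k fun x => (M x).det := by
  simp only [Matrix.det_apply, Units.smul_def, zsmul_eq_mul]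
  exact ContDiff.sum fun σ _ => contDiff_const.mul (contDiff_prod fun i _ => h (σ i) i)

theorem contDiff_matrix_adjugate_apply (h : ∀ i j, ContDiff ℝ k fun x => M x i j) (i j : ι) :
    ContDiff ℝ k fun x => (M x).adjugate i j := by
  simp only [Matrix.adjugate_apply]
  refine contDiff_matrix_det fun a b => ?_
  by_cases hab : a = j
  · subst hab
    simpa using contDiff_const
  · simpa [Matrix.updateRow_apply, hab] using h a b

theorem contDiff_matrix_inv_apply (h : ∀ i j, ContDiff ℝ k fun x => M x i j)
    (hdet : ∀ x, (M x).det ≠ 0) (i j : ι) :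
    ContDiff ℝ k fun x => (M x)⁻¹ i j := by
  simp only [Matrix.inv_def, Ring.inverse_eq_inv, Matrix.smul_apply, smul_eq_mul]
  exact ((contDiff_matrix_det h).inv hdet).mul (contDiff_matrix_adjugate_apply h i j)

end MatrixRegularity

theorem star_dotProduct_mulVec_eq_sum {ι : Type*} [Fintype ι] (A : Matrix ι ι ℝ) (ξ : ι → ℝ) :
    dotProduct (star ξ) (A.mulVec ξ) = ∑ i, ∑ j, A i j * ξ i * ξ j := by
  simp only [dotProduct, Matrix.mulVec, Pi.star_apply, star_trivial, Finset.mul_sum]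
  exact Finset.sum_congr rfl fun i _ => Finset.sum_congr rfl fun j _ => by ring

theorem UniformlyElliptic.posDef {g : Eucl n → Matrix (Fin n) (Fin n) ℝ} {θ : ℝ}
    (hgθ : UniformlyElliptic g θ) (hθ : 0 < θ) (hsym : ∀ x, (g x).IsSymm) (x : Eucl n) :
    (g x).PosDef := by
  refine Matrix.PosDef.of_dotProduct_mulVec_pos (hsym x) fun ξ hξ => ?_
  rw [star_dotProduct_mulVec_eq_sum]
  obtain ⟨i, hi⟩ := Function.ne_iff.mp hξ
  have hξ2 : 0 < ∑ i, ξ i ^ 2 :=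
    Finset.sum_pos' (fun j _ => sq_nonneg _) ⟨i, Finset.mem_univ i, sq_pos_of_ne_zero hi⟩
  exact (mul_pos hθ hξ2).trans_le (hgθ x ξ)

section PartialDerivatives

variable {u v ψ : Eucl n → ℝ} {x : Eucl n}

theorem pd_congr_of_eventuallyEq (h : u =ᶠ[𝓝 x] v) (i : Fin n) : pd u i x = pd v i x := by
  rw [pd, h.fderiv_eq, pd]

theorem pd_mul (hu : DifferentiableAt ℝ u x) (hv : DifferentiableAt ℝ v x) (i : Fin n) :
    pd (fun y => u y * v y) i x = pd u i x * v x + u x * pd v i x := by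
  simp only [pd, fderiv_fun_mul hu hv, add_apply, smul_apply, smul_eq_mul]
  ring

theorem pd_const_mul (hu : DifferentiableAt ℝ u x) (c : ℝ) (i : Fin n) :
    pd (fun y => c * u y) i x = c * pd u i x := by
  simp [pd, fderiv_const_mul hu c]

theorem pd_exp_const_mul (hψ : DifferentiableAt ℝ ψ x) (γ : ℝ) (i : Fin n) :
    pd (fun y => Real.exp (γ * ψ y)) i x = γ * Real.exp (γ * ψ x) * pd ψ i x := by
  simp only [pd, ((hψ.hasFDerivAt.const_mul γ).exp).fderiv, smul_apply, smul_eq_mul]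
  ring

theorem pd_eq_gradient_apply (i : Fin n) : pd u i x = gradient u x i := by
  rw [pd, ← InnerProductSpace.toDual_symm_apply, ← gradient, EuclideanSpace.inner_single_right]
  simp

theorem ContDiffOn.pd_of_isOpen {O : Set (Eucl n)} {k m : WithTop ℕ∞} (hu : ContDiffOn ℝ k u O)
    (hO : IsOpen O) (hmk : m + 1 ≤ k) (i : Fin n) : ContDiffOn ℝ m (pd u i) O :=
  (hu.fderiv_of_isOpen hO hmk).clm_apply contDiffOn_const

theorem ContDiffOn.continuousOn_pd {O : Set (Eucl n)} (hu : ContDiffOn ℝ 1 u O) (hO : IsOpen O)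
    (i : Fin n) : ContinuousOn (pd u i) O :=
  (hu.pd_of_isOpen hO (m := 0) (by norm_num) i).continuousOn

theorem ContDiffAt.differentiableAt_pd (hu : ContDiffAt ℝ 2 u x) (i : Fin n) :
    DifferentiableAt ℝ (pd u i) x :=
  ((hu.fderiv_right (m := 1) (by norm_num)).differentiableAt one_ne_zero).clm_apply
    (differentiableAt_const _)

theorem ContDiffAt.eventually_differentiableAt (hu : ContDiffAt ℝ 2 u x) :
    ∀ᶠ y in 𝓝 x, DifferentiableAt ℝ u y :=
  (hu.eventually (by simp)).mono fun _ hy => hy.differentiableAt (by norm_num)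

end PartialDerivatives

section ExponentialWeight

variable {g : Eucl n → Matrix (Fin n) (Fin n) ℝ} {ψ : Eucl n → ℝ} {x : Eucl n}

theorem pd_pd_exp_const_mul (hψ : ContDiffAt ℝ 2 ψ x) (γ : ℝ) (i j : Fin n) :
    pd (pd (fun y => Real.exp (γ * ψ y)) j) i x
      = γ * Real.exp (γ * ψ x) * (γ * pd ψ i x * pd ψ j x + pd (pd ψ j) i x) := by
  have hψx : DifferentiableAt ℝ ψ x := hψ.differentiableAt (by norm_num)
  have hexp : DifferentiableAt ℝ (fun y => Real.exp (γ * ψ y)) x :=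
    (hψx.const_mul γ).exp
  have hpd : pd (fun y => Real.exp (γ * ψ y)) j =ᶠ[𝓝 x]
      fun y => γ * (Real.exp (γ * ψ y) * pd ψ j y) :=
    hψ.eventually_differentiableAt.mono fun y hy => by
      rw [pd_exp_const_mul hy]
      ring
  rw [pd_congr_of_eventuallyEq hpd, pd_const_mul (hexp.fun_mul (hψ.differentiableAt_pd j)),
    pd_mul hexp (hψ.differentiableAt_pd j), pd_exp_const_mul hψx]
  ring

theorem covHess_exp_const_mul (hψ : ContDiffAt ℝ 2 ψ x) (γ : ℝ) (X : Fin n → ℝ) :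
    covHess g (fun y => Real.exp (γ * ψ y)) x X
      = γ * Real.exp (γ * ψ x) * (γ * (∑ i, pd ψ i x * X i) ^ 2 + covHess g ψ x X) := by
  have hterm : ∀ i j, (pd (pd (fun y => Real.exp (γ * ψ y)) j) i x
        - ∑ k, christoffel g k i j x * pd (fun y => Real.exp (γ * ψ y)) k x) * X i * X j
      = γ * Real.exp (γ * ψ x) * (γ * ((pd ψ i x * X i) * (pd ψ j x * X j))
        + (pd (pd ψ j) i x - ∑ k, christoffel g k i j x * pd ψ k x) * X i * X j) := by
    intro i j
    have hΓ : ∑ k, christoffel g k i j x * (γ * Real.exp (γ * ψ x) * pd ψ k x)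
        = γ * Real.exp (γ * ψ x) * ∑ k, christoffel g k i j x * pd ψ k x := by
      rw [Finset.mul_sum]
      exact Finset.sum_congr rfl fun k _ => by ring
    simp only [pd_pd_exp_const_mul hψ, pd_exp_const_mul (hψ.differentiableAt (by norm_num)), hΓ]
    ring
  simp only [covHess, hterm, ← Finset.mul_sum, Finset.sum_add_distrib, sq, Finset.sum_mul_sum]

end ExponentialWeight

def lapBelFlux (g : Eucl n → Matrix (Fin n) (Fin n) ℝ) (u : Eucl n → ℝ) (i : Fin n)
    (y : Eucl n) : ℝ :=
  √(g y).det * ∑ j, (g y)⁻¹ i j * pd u j y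

section LaplaceBeltrami

variable {g : Eucl n → Matrix (Fin n) (Fin n) ℝ} {ψ : Eucl n → ℝ} {x : Eucl n}

theorem lapBel_eq_sum_pd_lapBelFlux (u : Eucl n → ℝ) :
    LapBel g u x = (√(g x).det)⁻¹ * ∑ i, pd (lapBelFlux g u i) i x :=
  rfl

theorem sum_pd_mul_lapBelFlux :
    ∑ i, pd ψ i x * lapBelFlux g ψ i x = √(g x).det * gInnerGrad g ψ ψ x := by
  simp only [lapBelFlux, gInnerGrad, Finset.mul_sum]
  exact Finset.sum_congr rfl fun i _ => Finset.sum_congr rfl fun j _ => by ring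

theorem lapBel_exp_const_mul (hs : DifferentiableAt ℝ (fun y => √(g y).det) x)
    (hginv : ∀ i j, DifferentiableAt ℝ (fun y => (g y)⁻¹ i j) x) (hdet : 0 < (g x).det)
    (hψ : ContDiffAt ℝ 2 ψ x) (γ : ℝ) :
    LapBel g (fun y => Real.exp (γ * ψ y)) x
      = γ * Real.exp (γ * ψ x) * (γ * gInnerGrad g ψ ψ x + LapBel g ψ x) := by
  have hψx : DifferentiableAt ℝ ψ x := hψ.differentiableAt (by norm_num)
  have hflux : ∀ i, lapBelFlux g (fun y => Real.exp (γ * ψ y)) i =ᶠ[𝓝 x]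
      fun y => γ * (Real.exp (γ * ψ y) * lapBelFlux g ψ i y) := fun i =>
    hψ.eventually_differentiableAt.mono fun y hy => by
      simp only [lapBelFlux, pd_exp_const_mul hy, Finset.mul_sum]
      exact Finset.sum_congr rfl fun j _ => by ring
  have hdiff : ∀ i, DifferentiableAt ℝ (lapBelFlux g ψ i) x := fun i =>
    hs.fun_mul (DifferentiableAt.fun_sum fun j _ => (hginv i j).fun_mul (hψ.differentiableAt_pd j))
  have hpd : ∀ i, pd (lapBelFlux g (fun y => Real.exp (γ * ψ y)) i) i x
      = γ * Real.exp (γ * ψ x)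
        * (γ * (pd ψ i x * lapBelFlux g ψ i x) + pd (lapBelFlux g ψ i) i x) := fun i => by
    rw [pd_congr_of_eventuallyEq (hflux i), pd_const_mul ((hψx.const_mul γ).exp.fun_mul (hdiff i)),
      pd_mul (hψx.const_mul γ).exp (hdiff i), pd_exp_const_mul hψx]
    ring
  have hs0 : √(g x).det ≠ 0 := (Real.sqrt_pos.mpr hdet).ne'
  simp only [lapBel_eq_sum_pd_lapBelFlux, hpd, ← Finset.mul_sum, Finset.sum_add_distrib,
    sum_pd_mul_lapBelFlux]
  field_simp

end LaplaceBeltrami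

theorem abs_sum_sum_mul_mul_le {ι : Type*} [Fintype ι] (a : ι → ι → ℝ) (X : ι → ℝ) :
    |∑ i, ∑ j, a i j * X i * X j| ≤ (∑ i, ∑ j, |a i j|) * ∑ i, X i ^ 2 := by
  have hX : ∀ i j, |X i * X j| ≤ ∑ i, X i ^ 2 := fun i j => by
    have hi := Finset.single_le_sum (fun k _ => sq_nonneg (X k)) (Finset.mem_univ i)
    have hj := Finset.single_le_sum (fun k _ => sq_nonneg (X k)) (Finset.mem_univ j)
    rw [abs_le]
    constructor <;> nlinarith [sq_nonneg (X i - X j), sq_nonneg (X i + X j)]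
  calc |∑ i, ∑ j, a i j * X i * X j| ≤ ∑ i, ∑ j, |a i j * X i * X j| :=
        (Finset.abs_sum_le_sum_abs _ _).trans
          (Finset.sum_le_sum fun i _ => Finset.abs_sum_le_sum_abs _ _)
    _ ≤ ∑ i, ∑ j, |a i j| * ∑ i, X i ^ 2 := by
        gcongr with i _ j _
        rw [mul_assoc, abs_mul]
        exact mul_le_mul_of_nonneg_left (hX i j) (abs_nonneg _)
    _ = (∑ i, ∑ j, |a i j|) * ∑ i, X i ^ 2 := by simp only [Finset.sum_mul]

theorem IsCompact.exists_abs_sum_sum_mul_mul_le {α ι : Type*} [TopologicalSpace α] [Fintype ι]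
    {K : Set α} (hK : IsCompact K) {a : α → ι → ι → ℝ}
    (ha : ∀ i j, ContinuousOn (fun x => a x i j) K) :
    ∃ M, ∀ x ∈ K, ∀ X : ι → ℝ, |∑ i, ∑ j, a x i j * X i * X j| ≤ M * ∑ i, X i ^ 2 := by
  obtain ⟨M, hM⟩ := hK.exists_bound_of_continuousOn (f := fun x => ∑ i, ∑ j, |a x i j|)
    (continuousOn_finsetSum _ fun i _ => continuousOn_finsetSum _ fun j _ => (ha i j).abs)
  refine ⟨M, fun x hx X => (abs_sum_sum_mul_mul_le _ X).trans ?_⟩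
  gcongr
  exact (le_abs_self _).trans (hM x hx)

section CompactBounds

variable {g : Eucl n → Matrix (Fin n) (Fin n) ℝ} {ψ : Eucl n → ℝ} {O K : Set (Eucl n)}

theorem gInnerGrad_self_pos {x : Eucl n} (hg : (g x).PosDef) (hψ : gradient ψ x ≠ 0) :
    0 < gInnerGrad g ψ ψ x := by
  have hpd : (fun i => pd ψ i x) ≠ 0 := fun h =>
    hψ (PiLp.ext fun i => by simpa [← pd_eq_gradient_apply] using congrFun h i)
  have h := hg.inv.dotProduct_mulVec_pos hpd
  rwa [star_dotProduct_mulVec_eq_sum] at h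

theorem continuousOn_gInnerGrad (hginv : ∀ i j, Continuous fun y => (g y)⁻¹ i j)
    (hO : IsOpen O) (hψ : ContDiffOn ℝ 1 ψ O) : ContinuousOn (gInnerGrad g ψ ψ) O :=
  continuousOn_finsetSum _ fun i _ => continuousOn_finsetSum _ fun j _ =>
    ((hginv i j).continuousOn.mul (hψ.continuousOn_pd hO i)).mul (hψ.continuousOn_pd hO j)

theorem continuous_christoffel (hg : ∀ i j, ContDiff ℝ 1 fun y => g y i j)
    (hginv : ∀ i j, Continuous fun y => (g y)⁻¹ i j) (k i j : Fin n) :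
    Continuous (christoffel g k i j) := by
  have hpd : ∀ a b l, Continuous (pd (fun y => g y a b) l) := fun a b l =>
    continuousOn_univ.mp ((hg a b).contDiffOn.continuousOn_pd isOpen_univ l)
  exact continuous_const.mul (continuous_finsetSum _ fun l _ =>
    (hginv k l).mul (((hpd j l i).add (hpd i l j)).sub (hpd i j l)))

theorem continuousOn_lapBel (hs : ContDiff ℝ 1 fun y => √(g y).det) (hdet : ∀ y, 0 < (g y).det)
    (hginv : ∀ i j, ContDiff ℝ 1 fun y => (g y)⁻¹ i j) (hO : IsOpen O)
    (hψ : ContDiffOn ℝ 2 ψ O) : ContinuousOn (LapBel g ψ) O := by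
  have hflux : ∀ i, ContDiffOn ℝ 1 (lapBelFlux g ψ i) O := fun i =>
    hs.contDiffOn.mul (ContDiffOn.sum fun j _ =>
      (hginv i j).contDiffOn.mul (hψ.pd_of_isOpen hO (by norm_num) j))
  simp only [continuousOn_congr fun x _ => lapBel_eq_sum_pd_lapBelFlux (g := g) (x := x) ψ]
  exact (hs.continuous.continuousOn.inv₀ fun y _ => (Real.sqrt_pos.mpr (hdet y)).ne').mul
    (continuousOn_finsetSum _ fun i _ => (hflux i).continuousOn_pd hO i)

theorem exists_pos_le_gInnerGrad (hginv : ∀ i j, Continuous fun y => (g y)⁻¹ i j)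
    (hpos : ∀ x, (g x).PosDef) (hK : IsCompact K) (hKO : K ⊆ O) (hO : IsOpen O)
    (hψ : ContDiffOn ℝ 1 ψ O) (hgrad : ∀ x ∈ K, gradient ψ x ≠ 0) :
    ∃ c > 0, ∀ x ∈ K, c ≤ gInnerGrad g ψ ψ x :=
  hK.exists_forall_le' ((continuousOn_gInnerGrad hginv hO hψ).mono hKO) fun x hx =>
    gInnerGrad_self_pos (hpos x) (hgrad x hx)

theorem exists_lower_bound_two_covHess_add_lapBel {θ : ℝ}
    (hg : ∀ i j, ContDiff ℝ 1 fun y => g y i j) (hdet : ∀ y, 0 < (g y).det) (hθ : 0 < θ)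
    (hgθ : UniformlyElliptic g θ) (hK : IsCompact K) (hKO : K ⊆ O) (hO : IsOpen O)
    (hψ : ContDiffOn ℝ 2 ψ O) :
    ∃ B, ∀ x ∈ K, ∀ X : Fin n → ℝ,
      -(B * ∑ i, ∑ j, g x i j * X i * X j) ≤
        2 * covHess g ψ x X + LapBel g ψ x * ∑ i, ∑ j, g x i j * X i * X j := by
  have hginv : ∀ i j, ContDiff ℝ 1 fun y => (g y)⁻¹ i j :=
    contDiff_matrix_inv_apply hg fun y => (hdet y).ne'
  have hpdψ : ∀ j, ContDiffOn ℝ 1 (pd ψ j) O := hψ.pd_of_isOpen hO (by norm_num)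
  have hcoeff : ∀ i j, ContinuousOn
      (fun x => pd (pd ψ j) i x - ∑ k, christoffel g k i j x * pd ψ k x) K := fun i j =>
    ContinuousOn.mono (((hpdψ j).continuousOn_pd hO i).sub (continuousOn_finsetSum _ fun k _ =>
      (continuous_christoffel hg (fun a b => (hginv a b).continuous) k i j).continuousOn.mul
        (hpdψ k).continuousOn)) hKO
  obtain ⟨M, hM⟩ := hK.exists_abs_sum_sum_mul_mul_le hcoeff
  obtain ⟨L, hL⟩ := hK.exists_bound_of_continuousOn
    ((continuousOn_lapBel ((contDiff_matrix_det hg).sqrt fun y => (hdet y).ne') hdet hginv hO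
      hψ).mono hKO)
  refine ⟨2 * (|M| / θ) + L, fun x hx X => ?_⟩
  set q := ∑ i, ∑ j, g x i j * X i * X j
  have hS : 0 ≤ ∑ i, X i ^ 2 := Finset.sum_nonneg fun i _ => sq_nonneg (X i)
  have hSq : θ * ∑ i, X i ^ 2 ≤ q := hgθ x X
  have hq : 0 ≤ q := (mul_nonneg hθ.le hS).trans hSq
  have hH : |covHess g ψ x X| ≤ |M| * ∑ i, X i ^ 2 :=
    (hM x hx X).trans (mul_le_mul_of_nonneg_right (le_abs_self M) hS)
  have hHq : |M| * ∑ i, X i ^ 2 ≤ |M| / θ * q := by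
    rw [div_mul_eq_mul_div, le_div_iff₀ hθ]
    nlinarith [abs_nonneg M]
  have hLq : -(L * q) ≤ LapBel g ψ x * q := by
    have := neg_le_of_abs_le (hL x hx)
    nlinarith
  have := neg_le_of_abs_le hH
  linarith

end CompactBounds

theorem pseudoconvexity_gradient_term_general
    (n : ℕ)
    (g : Eucl n → Matrix (Fin n) (Fin n) ℝ) (hg : MetricC1 g)
    (θ : ℝ) (hθ : 0 < θ) (hgθ : UniformlyElliptic g θ)
    (K : Set (Eucl n)) (hK : IsCompact K)
    (O : Set (Eucl n)) (hO : IsOpen O) (hKO : K ⊆ O)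
    (ψ : Eucl n → ℝ) (hψ : ContDiffOn ℝ 2 ψ O)
    (δ : ℝ) (hδ : 0 < δ) (hψδ : ∀ x ∈ K, δ ≤ ‖gradient ψ x‖) :
    ∃ C > (0 : ℝ), ∃ γstar ≥ (1 : ℝ), ∀ γ ≥ γstar, ∀ x ∈ K, ∀ X : Fin n → ℝ,
      C * γ ^ 2 * Real.exp (γ * ψ x) * (∑ i, ∑ j, g x i j * X i * X j) ≤
        2 * covHess g (fun y => Real.exp (γ * ψ y)) x X +
          LapBel g (fun y => Real.exp (γ * ψ y)) x *
            (∑ i, ∑ j, g x i j * X i * X j) := by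
  obtain ⟨hsym, hg1⟩ := hg
  have hpos : ∀ x, (g x).PosDef := hgθ.posDef hθ hsym
  have hdet : ∀ x, 0 < (g x).det := fun x => (hpos x).det_pos
  have hginv : ∀ i j, ContDiff ℝ 1 fun y => (g y)⁻¹ i j :=
    contDiff_matrix_inv_apply hg1 fun y => (hdet y).ne'
  have hs : ContDiff ℝ 1 fun y => √(g y).det :=
    (contDiff_matrix_det hg1).sqrt fun y => (hdet y).ne'
  obtain ⟨c, hc, hcQ⟩ := exists_pos_le_gInnerGrad (fun i j => (hginv i j).continuous) hpos hK hKO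
    hO (hψ.of_le (by norm_num)) fun x hx => norm_pos_iff.mp (hδ.trans_le (hψδ x hx))
  obtain ⟨B, hB⟩ := exists_lower_bound_two_covHess_add_lapBel hg1 hdet hθ hgθ hK hKO hO hψ
  refine ⟨c / 2, half_pos hc, max 1 (2 * B / c), le_max_left _ _, fun γ hγ x hx X => ?_⟩
  have hγ0 : 0 ≤ γ := zero_le_one.trans ((le_max_left _ _).trans hγ)
  have hγB : 2 * B ≤ γ * c := (div_le_iff₀ hc).mp ((le_max_right _ _).trans hγ)
  have hψx : ContDiffAt ℝ 2 ψ x := hψ.contDiffAt (hO.mem_nhds (hKO hx))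
  rw [covHess_exp_const_mul hψx, lapBel_exp_const_mul (hs.differentiable one_ne_zero x)
    (fun i j => (hginv i j).differentiable one_ne_zero x) (hdet x) hψx]
  set q := ∑ i, ∑ j, g x i j * X i * X j
  have hq : 0 ≤ q := (hpos x).posSemidef.dotProduct_mulVec_nonneg X |>.trans_eq
    (star_dotProduct_mulVec_eq_sum _ _)
  have key : c / 2 * γ * q ≤ 2 * (γ * (∑ i, pd ψ i x * X i) ^ 2 + covHess g ψ x X)
      + (γ * gInnerGrad g ψ ψ x + LapBel g ψ x) * q := by
    have hQ := mul_le_mul_of_nonneg_right (hcQ x hx) (mul_nonneg hγ0 hq)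
    have hBq := mul_le_mul_of_nonneg_right hγB hq
    have hP := mul_nonneg hγ0 (sq_nonneg (∑ i, pd ψ i x * X i))
    linarith [hB x hx X]
  have := mul_le_mul_of_nonneg_left key (by positivity : 0 ≤ γ * Real.exp (γ * ψ x))
  linarith

/-- **Pointwise pseudoconvexity estimate for the gradient term.**
For `φ̃ = e^{γψ}` and `γ` large: `2∇²_g φ̃(X,X) + (Δ_g φ̃)|X|_g² ≥ Cγ²φ̃|X|_g²` on `K`. -/
theorem pseudoconvexity_gradient_term
    (n : ℕ) (hn : 2 ≤ n)
    (g : Eucl n → Matrix (Fin n) (Fin n) ℝ) (hg : MetricC1 g)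
    (θ : ℝ) (hθ : 0 < θ) (hgθ : UniformlyElliptic g θ)
    (K : Set (Eucl n)) (hK : IsCompact K)
    (O : Set (Eucl n)) (hO : IsOpen O) (hKO : K ⊆ O)
    (ψ : Eucl n → ℝ) (hψ : ContDiffOn ℝ 2 ψ O)
    (δ : ℝ) (hδ : 0 < δ) (hψδ : ∀ x ∈ K, δ ≤ ‖gradient ψ x‖) :
    ∃ C > (0 : ℝ), ∃ γstar ≥ (1 : ℝ), ∀ γ ≥ γstar, ∀ x ∈ K, ∀ X : Fin n → ℝ,
      C * γ ^ 2 * Real.exp (γ * ψ x) * (∑ i, ∑ j, g x i j * X i * X j) ≤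
        2 * covHess g (fun y => Real.exp (γ * ψ y)) x X +
          LapBel g (fun y => Real.exp (γ * ψ y)) x *
            (∑ i, ∑ j, g x i j * X i * X j) :=
  pseudoconvexity_gradient_term_general n g hg θ hθ hgθ K hK O hO hKO ψ hψ δ hδ hψδ
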